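/- A maniplex M satisfies the component intersection property if and only if it satisfies the weak path intersection property. -/

import Mathlib

/-- An `n`-maniplex on vertex (flag) set `V`: a nonempty, connected, properly
`n`-edge-coloured simple `n`-regular graph (encoded by the fixed-point-free
involutions `σ i` giving the unique `i`-neighbour of each vertex) such that the
2-factors of colours `i`, `j` with `|i - j| > 1` are 4-cycles. -/
structure Maniplex (n : ℕ) (V : Type) where
  nonempty : Nonempty V
  σ : Fin n → V → V
  invol : ∀ i v, σ i (σ i v) = v
  nofix : ∀ i v, σ i v ≠ v
  conn : ∀ u v : V, Relation.ReflTransGen (fun x y => ∃ i, σ i x = y) u v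
  comm : ∀ i j : Fin n, (i : ℕ) + 1 < (j : ℕ) → ∀ v,
    σ i (σ j v) = σ j (σ i v) ∧ σ i v ≠ σ j v

namespace Maniplex

variable {n : ℕ} {V : Type}

/-- There is a path from `u` to `v` using only edges with colours in `A`. -/
def ReachIn (M : Maniplex n V) (A : Set (Fin n)) (u v : V) : Prop :=
  Relation.ReflTransGen (fun x y => ∃ i ∈ A, M.σ i x = y) u v

/-- The `i`-face of `M` containing `v`: the connected component of `v` in the
spanning subgraph with all edges of colour `i` deleted. -/
def face (M : Maniplex n V) (i : Fin n) (v : V) : Set V :=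
  {u | M.ReachIn {j | j ≠ i} v u}

/-- `S` is an `i`-face of `M`. -/
def IsFace (M : Maniplex n V) (i : Fin n) (S : Set V) : Prop :=
  ∃ v, S = M.face i v

end Maniplex
namespace Maniplex

variable {n : ℕ} {V : Type}

/-- The type of (proper) faces of a maniplex: a rank together with a face of that rank. -/
def FaceT (M : Maniplex n V) : Type := {F : Fin n × Set V // M.IsFace F.1 F.2}

/-- The order on faces: `F ≤ G` iff `rank F ≤ rank G` and `F ∩ G ≠ ∅`. -/
def faceLe (M : Maniplex n V) (F G : M.FaceT) : Prop :=
  F.1.1 ≤ G.1.1 ∧ (F.1.2 ∩ G.1.2).Nonempty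

/-- The faces of `M` together with adjoined minimum `none` and maximum `some none`. -/
def PFace (M : Maniplex n V) : Type := Option (Option M.FaceT)

/-- The order on `P_M` (with the improper minimum and maximum adjoined). -/
def ple (M : Maniplex n V) : M.PFace → M.PFace → Prop
  | none, _ => True
  | _, some none => True
  | some (some F), some (some G) => M.faceLe F G
  | _, _ => False

/-- The rank function of `P_M`. -/
def prank (M : Maniplex n V) : M.PFace → ℤ
  | none => -1
  | some none => (n : ℤ)
  | some (some F) => ((F.1.1 : ℕ) : ℤ)

/-- The component intersection property: for every chain of faces, the
intersection of the faces is a connected subgraph of `M`. -/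
def CIP (M : Maniplex n V) : Prop :=
  ∀ (k : ℕ) (r : Fin k → Fin n) (S : Fin k → Set V),
    (∀ a, M.IsFace (r a) (S a)) →
    (∀ a b, (S a ∩ S b).Nonempty) →
    ∀ u v : V, (∀ a, u ∈ S a) → (∀ a, v ∈ S a) →
      M.ReachIn {c | ∀ a, c ≠ r a} u v

/-- The diamond condition for the poset `P_M`. -/
def Diamond (M : Maniplex n V) : Prop :=
  ∀ (i : Fin n) (E F : M.PFace), M.ple E F →
    M.prank E = ((i : ℕ) : ℤ) - 1 → M.prank F = ((i : ℕ) : ℤ) + 1 →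
    ∃ H₁ H₂ : M.PFace, H₁ ≠ H₂ ∧
      ∀ H : M.PFace,
        (M.prank H = ((i : ℕ) : ℤ) ∧ M.ple E H ∧ M.ple H F) ↔ (H = H₁ ∨ H = H₂)

/-- A maximal chain of proper faces of `P_M`: one face of each rank,
pairwise incident. -/
def IsFlag (M : Maniplex n V) (S : Fin n → Set V) : Prop :=
  (∀ i, M.IsFace i (S i)) ∧ ∀ i j, ((S i) ∩ (S j)).Nonempty

/-- `P_M` is faithful: every maximal chain of proper faces has a unique common vertex. -/
def Faithful (M : Maniplex n V) : Prop :=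
  ∀ S : Fin n → Set V, M.IsFlag S → ∃! v : V, ∀ i, v ∈ S i

/-- Strong flag connectivity of `P_M`: any two maximal chains `Φ`, `Ψ` are joined
by a sequence of successively adjacent maximal chains all containing `Φ ∩ Ψ`. -/
def SFC (M : Maniplex n V) : Prop :=
  ∀ Φ Ψ : Fin n → Set V, M.IsFlag Φ → M.IsFlag Ψ →
    Relation.ReflTransGen
      (fun X Y => M.IsFlag Y ∧ (∃ j, X j ≠ Y j ∧ ∀ l, l ≠ j → X l = Y l) ∧
        ∀ i, Φ i = Ψ i → Y i = Φ i) Φ Ψ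

/-- The strong path intersection property. -/
def SPIP (M : Maniplex n V) : Prop :=
  ∀ (A B : Set (Fin n)) (u v : V),
    M.ReachIn A u v → M.ReachIn B u v → M.ReachIn (A ∩ B) u v

/-- The weak path intersection property. -/
def WPIP (M : Maniplex n V) : Prop :=
  ∀ i j : Fin n, i < j → ∀ u v : V,
    M.ReachIn {c | i < c} u v → M.ReachIn {c | c < j} u v →
    M.ReachIn {c | i < c ∧ c < j} u v

end Maniplex

/-!
Both properties are equivalent to simultaneous avoidance: if `u` and `v` can be joined, for
each colour `t` of a set `T`, by a path avoiding `t`, then they can be joined by a path avoiding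
all of `T`. For CIP this is a rephrasing, since a face of rank `t` is a component of the graph
without colour `t`; WPIP is the case `T = {c | c ≤ i ∨ j ≤ c}`.

Conversely, assume WPIP and remove the largest colour `a` of `T`. Colours below `a` commute with
colours above `a`, so a path avoiding `a` can be rearranged into a part `u ⟶ w` above `a`
followed by a part `w ⟶ v` below `a`. If `u, v` are also joined below some bound `b > a`, WPIP
confines `u ⟶ w` to colours strictly between `a` and `b`, and induction with the bound `a`
handles `w ⟶ v`.
-/

namespace Maniplex

open Relation

variable {n : ℕ} {V : Type} {M : Maniplex n V} {A B : Set (Fin n)} {u v w : V}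

lemma ReachIn.mono (hAB : A ⊆ B) (h : M.ReachIn A u v) : M.ReachIn B u v :=
  ReflTransGen.mono (fun _ _ ⟨i, hi, hs⟩ => ⟨i, hAB hi, hs⟩) _ _ h

lemma ReachIn.trans (h : M.ReachIn A u v) (h' : M.ReachIn A v w) : M.ReachIn A u w :=
  ReflTransGen.trans h h'

lemma ReachIn.symm (h : M.ReachIn A u v) : M.ReachIn A v u :=
  ReflTransGen.mono (fun x y ⟨i, hi, hs⟩ => ⟨i, hi, by rw [← hs, M.invol]⟩) _ _ h.swap

lemma ReachIn.map (c : Fin n) (hc : ∀ d ∈ A, ∀ x, M.σ c (M.σ d x) = M.σ d (M.σ c x))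
    (h : M.ReachIn A u v) : M.ReachIn A (M.σ c u) (M.σ c v) :=
  ReflTransGen.lift (M.σ c) (fun x _ ⟨d, hd, hs⟩ => ⟨d, hd, by rw [← hs, hc d hd]⟩) _ _ h

lemma ReachIn.exists_split_of_commute
    (hAB : ∀ a ∈ A, ∀ b ∈ B, ∀ x, M.σ a (M.σ b x) = M.σ b (M.σ a x))
    (h : M.ReachIn (A ∪ B) u v) : ∃ w, M.ReachIn A u w ∧ M.ReachIn B w v := by
  induction h using ReflTransGen.head_induction_on with
  | refl => exact ⟨v, .refl, .refl⟩
  | head step _ ih =>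
    obtain ⟨d, hd, rfl⟩ := step
    obtain ⟨w, hw, hwv⟩ := ih
    rcases hd with hdA | hdB
    · exact ⟨w, ReflTransGen.head ⟨d, hdA, rfl⟩ hw, hwv⟩
    · refine ⟨M.σ d w, ?_, ReflTransGen.head ⟨d, hdB, M.invol d w⟩ hwv⟩
      simpa only [M.invol] using hw.map d fun a ha x => (hAB a ha d hdB x).symm

lemma ReachIn.exists_lt_gt {i : Fin n} (h : M.ReachIn {c | c ≠ i} u v) :
    ∃ w, M.ReachIn {c | c < i} u w ∧ M.ReachIn {c | i < c} w v := by
  have hsplit : {c | c ≠ i} = {c | c < i} ∪ {c | i < c} := by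
    ext c
    exact ne_iff_lt_or_gt
  refine ReachIn.exists_split_of_commute (fun a ha b hb x => ?_) (hsplit ▸ h)
  exact (M.comm a b (Nat.lt_of_le_of_lt ha hb) x).1

lemma reachIn_of_mem_face {i : Fin n} (hu : u ∈ M.face i w) (hv : v ∈ M.face i w) :
    M.ReachIn {c | c ≠ i} u v :=
  ReachIn.trans (ReachIn.symm hu) hv

variable (M) in
def SimultaneousAvoidance : Prop :=
  ∀ (T : Finset (Fin n)) (u v : V),
    (∀ t ∈ T, M.ReachIn {c | c ≠ t} u v) → M.ReachIn {c | c ∉ T} u v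

lemma CIP.simultaneousAvoidance (hC : M.CIP) : M.SimultaneousAvoidance := by
  intro T u v hT
  let r : Fin T.card → Fin n := fun a => T.equivFin.symm a
  have huv := hC T.card r (fun a => M.face (r a) u) (fun a => ⟨u, rfl⟩)
    (fun a b => ⟨u, .refl, .refl⟩) u v (fun a => .refl) (fun a => hT _ (T.equivFin.symm a).2)
  exact huv.mono fun c (hc : ∀ a, c ≠ r a) hcT => hc (T.equivFin ⟨c, hcT⟩) (by simp [r])

lemma SimultaneousAvoidance.cip (hS : M.SimultaneousAvoidance) : M.CIP := by
  intro k r S hS_face _ u v hu hv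
  refine (hS (Finset.univ.image r) u v ?_).mono
    fun c (hc : c ∉ Finset.univ.image r) a hca => hc ?_
  · simp only [Finset.mem_image, Finset.mem_univ, true_and, forall_exists_index,
      forall_apply_eq_imp_iff]
    intro a
    obtain ⟨w, hw⟩ := hS_face a
    exact reachIn_of_mem_face (hw ▸ hu a) (hw ▸ hv a)
  · exact hca ▸ Finset.mem_image_of_mem r (Finset.mem_univ a)

lemma SimultaneousAvoidance.wpip (hS : M.SimultaneousAvoidance) : M.WPIP := by
  intro i j hij u v hgt hlt
  refine (hS (Finset.univ.filter fun c => c ≤ i ∨ j ≤ c) u v ?_).mono fun c hc => ?_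
  · intro t ht
    rcases (Finset.mem_filter.mp ht).2 with hti | hjt
    · exact hgt.mono fun c hc => (lt_of_le_of_lt hti hc).ne'
    · exact hlt.mono fun c hc => (lt_of_lt_of_le hc hjt).ne
  · simpa [not_or] using hc

lemma WPIP.reachIn_between (hW : M.WPIP) {i : Fin n} {b : ℕ} (hib : (i : ℕ) < b)
    (h₁ : M.ReachIn {c | i < c} u v) (h₂ : M.ReachIn {c | (c : ℕ) < b} u v) :
    M.ReachIn {c | i < c ∧ (c : ℕ) < b} u v := by
  by_cases hb : b < n
  · exact hW i ⟨b, hb⟩ hib u v h₁ h₂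
  · exact h₁.mono fun c hc => ⟨hc, by omega⟩

lemma WPIP.reachIn_lt_notMem (hW : M.WPIP) {T : Finset (Fin n)} {b : ℕ}
    (hTb : ∀ t ∈ T, (t : ℕ) < b) (hb : M.ReachIn {c | (c : ℕ) < b} u v)
    (hT : ∀ t ∈ T, M.ReachIn {c | c ≠ t} u v) :
    M.ReachIn {c | (c : ℕ) < b ∧ c ∉ T} u v := by
  induction T using Finset.induction_on_max generalizing b u v with
  | empty => exact hb.mono fun c hc => ⟨hc, Finset.notMem_empty c⟩
  | insert a s hsa ih =>
    have hab : (a : ℕ) < b := hTb a (Finset.mem_insert_self a s)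
    obtain ⟨w, hvw, hwu⟩ := (hT a (Finset.mem_insert_self a s)).symm.exists_lt_gt
    have huw : M.ReachIn {c | a < c ∧ (c : ℕ) < b} u w :=
      hW.reachIn_between hab hwu.symm
        (hb.trans (hvw.mono fun c (hc : c < a) => Nat.lt_trans hc hab))
    have hwv : M.ReachIn {c | (c : ℕ) < a ∧ c ∉ s} w v := by
      refine ih hsa hvw.symm fun t ht => ?_
      refine (huw.symm.mono fun c hc => ?_).trans
        (hT t (Finset.mem_insert_of_mem ht))
      exact ((hsa t ht).trans hc.1).ne'
    refine ReachIn.trans (huw.mono fun c hc => ?_) (hwv.mono fun c hc => ?_) <;>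
      simp only [Set.mem_ofPred_eq, Finset.mem_insert, not_or] at hc ⊢
    · exact ⟨hc.2, hc.1.ne', fun hcs => lt_asymm (hsa c hcs) hc.1⟩
    · exact ⟨Nat.lt_trans hc.1 hab, Fin.ne_of_lt hc.1, hc.2⟩

lemma WPIP.simultaneousAvoidance (hW : M.WPIP) : M.SimultaneousAvoidance := by
  intro T u v hT
  refine (hW.reachIn_lt_notMem (fun t _ => t.isLt) ?_ hT).mono fun c hc => hc.2
  exact ReflTransGen.mono (fun _ _ ⟨i, hs⟩ => ⟨i, i.isLt, hs⟩) _ _ (M.conn u v)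

end Maniplex

/-- A maniplex satisfies the component intersection property if and only if it
satisfies the weak path intersection property. -/
theorem cip_iff_wpip {n : ℕ} {V : Type} (M : Maniplex n V) :
    M.CIP ↔ M.WPIP :=
  ⟨fun hC => hC.simultaneousAvoidance.wpip, fun hW => hW.simultaneousAvoidance.cip⟩
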